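/- arXiv:cs/0508024 — 2 statements merged into one kernel-verified Lean document; each statement's English description precedes it below -/
import Mathlib

section
/- Let q be even, let J = {j_0,...,j_{k-1}} and I = {i_0,...,i_{m-k-1}} partition {0,1,...,m-1}, and write x = (x_{j_0},...,x_{j_{k-1}}). Let f : Z_2^m → Z_q be a generalized Boolean function such that for each d ∈ Z_2^k the restricted function f|_{x=d} equals (q/2)·Σ_{α=0}^{m-k-2} x_{π_d(α)} x_{π_d(α+1)} + Σ_{α=0}^{m-k-1} c_{d,α} x_{i_α} + c_d, where π_d is a bijection from {0,...,m-k-1} onto I and c_{d,α}, c_d ∈ Z_q. For each d define a_d to be either π_d(0) or π_d(m-k-1), and set e = Σ_{d ∈ Z_2^k} x_{a_d} · Π_{α=0}^{k-1} x_{j_α}^{d_α}(1 - x_{j_α})^{1-d_α}. Then the 2^{k+1} polyphase vectors associated with the functions f + (q/2)(Σ_{α=0}^{k-1} c_α x_{j_α} + c'·e), as (c_0,...,c_{k-1}, c') ranges over Z_2^{k+1}, form a complementary set of size 2^{k+1}: the sum over all 2^{k+1} vectors of their aperiodic autocorrelations is zero at every nonzero displacement. -/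
/-!
Multiplying out the autocorrelations and summing over the `2^{k+1}` sign patterns `(c, c')` leaves,
up to the factor `2^{k+1}`, the sum of `ξ^{f(i) - f(j)}` over the pairs of positions `i = j + ℓ`
on which `x_J` takes a common value `d` and `e` has the same parity, i.e. on which `x_{a_d}` agrees.
Orient each path `π_d` so that it starts at `a_d`. Since `i ≠ j` they differ somewhere on the path,
and not at its start; flipping the bit of both `i` and `j` at the vertex preceding the first
disagreement preserves `i - j`, the linear part of `f(i) - f(j)` and the conditions above, while the
flipped vertex has exactly one path neighbour on which `i` and `j` differ, so the parity of the
quadratic part changes and `ξ^{f(i) - f(j)}` changes sign. This is a fixed-point-free involution on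
the surviving pairs, so the sum vanishes.
-/

open Finset

/-- Aperiodic cross-correlation of two length-`n` complex sequences at integer displacement `ℓ`. -/
noncomputable def crossCorr (n : ℕ) (A B : ℕ → ℂ) (ℓ : ℤ) : ℂ :=
  ∑ i ∈ Finset.range n, ∑ j ∈ Finset.range n,
    if (i : ℤ) = (j : ℤ) + ℓ then A i * (starRingEnd ℂ) (B j) else 0

/-- Aperiodic autocorrelation. -/
noncomputable def autoCorr (n : ℕ) (A : ℕ → ℂ) (ℓ : ℤ) : ℂ := crossCorr n A A ℓ

/-- The binary expansion of `i`, as a point of `ℤ₂^m`. -/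
def bits (m : ℕ) (i : ℕ) : Fin m → ZMod 2 := fun j => if Nat.testBit i j.val then 1 else 0

/-- The polyphase vector `F = ξ^f` associated with `f : ℤ₂^m → ℤ_q`, `ξ = e^{2π√-1/q}`. -/
noncomputable def polyVec {q : ℕ} (m : ℕ) (f : (Fin m → ZMod 2) → ZMod q) : ℕ → ℂ :=
  fun i => Complex.exp (2 * Real.pi * Complex.I * ((f (bits m i)).val : ℂ) / (q : ℂ))

/-- The (0/1-valued) function `e = ∑_{d ∈ ℤ₂^k} x_{a_d} ∏_{α<k} x_{j_α}^{d_α}(1-x_{j_α})^{1-d_α}`,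
computed in `ℕ`. -/
def eFun (m k : ℕ) (jJ : Fin k → Fin m) (aD : (Fin k → ZMod 2) → Fin m)
    (y : Fin m → ZMod 2) : ℕ :=
  ∑ d : Fin k → ZMod 2, (y (aD d)).val *
    ∏ b : Fin k, (y (jJ b)).val ^ (d b).val * (1 - (y (jJ b)).val) ^ (1 - (d b).val)

open ZMod (stdAddChar)
open ComplexConjugate

section Characters

variable {q : ℕ}

lemma polyVec_apply [NeZero q] (m : ℕ) (g : (Fin m → ZMod 2) → ZMod q) (i : ℕ) :
    polyVec m g i = stdAddChar (g (bits m i)) := by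
  rw [polyVec, ZMod.stdAddChar_apply, ZMod.toCircle_apply]

lemma stdAddChar_mul_conj [NeZero q] (a b : ZMod q) :
    stdAddChar a * conj (stdAddChar b) = stdAddChar (a - b) := by
  rw [← AddChar.map_neg_eq_conj, ← AddChar.map_add_eq_mul, sub_eq_add_neg]

lemma stdAddChar_half_mul [NeZero q] (hq : Even q) (N : ℕ) :
    stdAddChar (((q / 2 : ℕ) : ZMod q) * (N : ZMod q)) = (-1 : ℂ) ^ N := by
  obtain ⟨t, rfl⟩ := hq
  have ht : (t : ℂ) ≠ 0 := by
    have := NeZero.ne (t + t)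
    exact_mod_cast (by omega : t ≠ 0)
  rw [← Nat.cast_mul, ← Int.cast_natCast, ZMod.stdAddChar_coe, ← Complex.exp_pi_mul_I,
    ← Complex.exp_nat_mul, show (t + t) / 2 = t by omega]
  congr 1
  push_cast
  field_simp
  ring

lemma natCast_half_mul_two (hq : Even q) : ((q / 2 : ℕ) : ZMod q) * 2 = 0 := by
  rw [show (2 : ZMod q) = ((2 : ℕ) : ZMod q) by norm_num, ← Nat.cast_mul,
    Nat.div_mul_cancel hq.two_dvd, ZMod.natCast_self]

lemma stdAddChar_add_half_mul_sub [NeZero q] (hq : Even q) (F G : ZMod q) (N M : ℕ) :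
    stdAddChar ((F + ((q / 2 : ℕ) : ZMod q) * (N : ZMod q)) -
        (G + ((q / 2 : ℕ) : ZMod q) * (M : ZMod q))) =
      (-1 : ℂ) ^ (N + M) * stdAddChar (F - G) := by
  rw [← stdAddChar_half_mul hq, ← AddChar.map_add_eq_mul]
  congr 1
  push_cast
  linear_combination (-(M : ZMod q)) * natCast_half_mul_two hq

lemma neg_one_pow_eq_neg_of_natCast_eq_add_one {a b : ℕ} (h : (a : ZMod 2) = b + 1) :
    (-1 : ℂ) ^ a = -(-1 : ℂ) ^ b := by
  have hmod : a % 2 = (b + 1) % 2 := by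
    rw [← ZMod.natCast_eq_natCast_iff']
    push_cast
    exact h
  rw [neg_one_pow_eq_pow_mod_two, hmod, ← neg_one_pow_eq_pow_mod_two, pow_succ, mul_neg_one]

lemma stdAddChar_half_mul_add_sub_of_parity [NeZero q] (hq : Even q) {N M N' M' : ℕ}
    {a b a' b' : ZMod q} (hab : a' - b' = a - b)
    (hpar : ((N' + M' : ℕ) : ZMod 2) = N + M + 1) :
    stdAddChar ((((q / 2 : ℕ) : ZMod q) * (N' : ZMod q) + a') -
        (((q / 2 : ℕ) : ZMod q) * (M' : ZMod q) + b')) =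
      -stdAddChar ((((q / 2 : ℕ) : ZMod q) * (N : ZMod q) + a) -
        (((q / 2 : ℕ) : ZMod q) * (M : ZMod q) + b)) := by
  simp only [add_comm (((q / 2 : ℕ) : ZMod q) * _)]
  rw [stdAddChar_add_half_mul_sub hq, stdAddChar_add_half_mul_sub hq, hab,
    neg_one_pow_eq_neg_of_natCast_eq_add_one (by exact_mod_cast hpar), neg_mul]

end Characters

lemma ZMod.even_val_add_val_iff (x y : ZMod 2) : Even (x.val + y.val) ↔ x = y := by
  revert x y
  decide

lemma sum_zmod_two_neg_one_pow (n : ℕ) :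
    ∑ c : ZMod 2, (-1 : ℂ) ^ (c.val * n) = if Even n then 2 else 0 := by
  rw [show (univ : Finset (ZMod 2)) = {0, 1} by decide, sum_pair zero_ne_one, ZMod.val_zero,
    ZMod.val_one, zero_mul, one_mul, pow_zero]
  rcases n.even_or_odd with h | h
  · rw [h.neg_one_pow, if_pos h]
    norm_num
  · rw [h.neg_one_pow, if_neg (Nat.not_even_iff_odd.2 h)]
    norm_num

lemma sum_pi_zmod_two_neg_one_pow {k : ℕ} (n : Fin k → ℕ) :
    ∑ c : Fin k → ZMod 2, (-1 : ℂ) ^ (∑ α, (c α).val * n α) =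
      if ∀ α, Even (n α) then 2 ^ k else 0 := by
  simp_rw [← prod_pow_eq_pow_sum]
  rw [← Fintype.prod_sum (fun α (c : ZMod 2) => (-1 : ℂ) ^ (c.val * n α))]
  simp_rw [sum_zmod_two_neg_one_pow, Fintype.prod_ite_zero, prod_const, card_univ,
    Fintype.card_fin]

lemma sum_stdAddChar_add_half_mul_mul_conj {q k : ℕ} [NeZero q] (hq : Even q) (F G : ZMod q)
    (a b : Fin k → ZMod 2) (s t : ℕ) :
    ∑ cc : Fin k → ZMod 2, ∑ c' : ZMod 2,
      stdAddChar (F + ((q / 2 : ℕ) : ZMod q) *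
          (((∑ α, (cc α).val * (a α).val) + c'.val * s : ℕ) : ZMod q)) *
        conj (stdAddChar (G + ((q / 2 : ℕ) : ZMod q) *
          (((∑ α, (cc α).val * (b α).val) + c'.val * t : ℕ) : ZMod q))) =
      if a = b ∧ Even (s + t) then 2 ^ (k + 1) * stdAddChar (F - G) else 0 := by
  have hexp : ∀ (cc : Fin k → ZMod 2) (c' : ZMod 2),
      (∑ α, (cc α).val * (a α).val + c'.val * s) + (∑ α, (cc α).val * (b α).val + c'.val * t) =
        (∑ α, (cc α).val * ((a α).val + (b α).val)) + c'.val * (s + t) := by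
    intro cc c'
    simp only [mul_add, sum_add_distrib]
    ring
  simp_rw [stdAddChar_mul_conj, stdAddChar_add_half_mul_sub hq, hexp, pow_add,
    mul_comm _ (stdAddChar (F - G)), ← mul_sum, ← sum_mul, sum_pi_zmod_two_neg_one_pow,
    sum_zmod_two_neg_one_pow, ZMod.even_val_add_val_iff, ← funext_iff]
  split_ifs <;> simp_all

lemma bits_xor_two_pow (m i : ℕ) (p : Fin m) :
    bits m (i ^^^ 2 ^ (p : ℕ)) = bits m i + Pi.single p 1 := by
  funext t
  by_cases htp : t = p
  · subst htp
    by_cases hb : i.testBit t <;> simp [bits, hb]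
    decide
  · have : (p : ℕ) ≠ t := fun h => htp (Fin.ext h.symm)
    simp [bits, Nat.testBit_two_pow_of_ne this, htp]

lemma eq_of_bits_eq {m i j : ℕ} (hi : i < 2 ^ m) (hj : j < 2 ^ m) (h : bits m i = bits m j) :
    i = j := by
  refine Nat.eq_of_testBit_eq fun n => ?_
  by_cases hn : n < m
  · have := congrFun h ⟨n, hn⟩
    simp only [bits] at this
    split_ifs at this <;> simp_all
  · have hm : 2 ^ m ≤ 2 ^ n := Nat.pow_le_pow_right two_pos (not_lt.1 hn)
    rw [Nat.testBit_lt_two_pow (hi.trans_le hm), Nat.testBit_lt_two_pow (hj.trans_le hm)]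

lemma testBit_eq_of_bits_apply_eq {m i j : ℕ} {p : Fin m} (h : bits m i p = bits m j p) :
    i.testBit p = j.testBit p := by
  simp only [bits] at h
  split_ifs at h <;> simp_all

lemma natCast_xor_two_pow_sub (x p : ℕ) :
    ((x ^^^ 2 ^ p : ℕ) : ℤ) - x = if x.testBit p then -2 ^ p else 2 ^ p := by
  -- `x ^^^ 2 ^ p` has the same remainder mod `2 ^ p` as `x`, and quotient `(x / 2 ^ p) ^^^ 1`
  have hy := Nat.div_add_mod (x ^^^ 2 ^ p) (2 ^ p)
  rw [Nat.xor_div_two_pow, Nat.xor_mod_two_pow, Nat.div_self (by positivity), Nat.mod_self,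
    Nat.xor_zero] at hy
  have hx := Nat.div_add_mod x (2 ^ p)
  rw [Nat.testBit_eq_decide_div_mod_eq]
  rcases Nat.even_or_odd (x / 2 ^ p) with ⟨n, hn⟩ | ⟨n, hn⟩
  · rw [hn, Nat.xor_one_of_even ⟨n, rfl⟩] at hy
    rw [hn] at hx
    simp only [hn, show (n + n) % 2 = 0 by omega, zero_ne_one, decide_false,
      Bool.false_eq_true, if_false]
    zify at hx hy
    linear_combination hx - hy
  · rw [hn, Nat.xor_one_of_odd ⟨n, rfl⟩, Nat.add_sub_cancel] at hy
    rw [hn] at hx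
    simp only [hn, show (2 * n + 1) % 2 = 1 by omega, decide_true, if_true]
    zify at hx hy
    linear_combination hx - hy

lemma natCast_xor_two_pow_sub_xor_two_pow {m i j : ℕ} {p : Fin m}
    (h : bits m i p = bits m j p) :
    ((i ^^^ 2 ^ (p : ℕ) : ℕ) : ℤ) - (j ^^^ 2 ^ (p : ℕ) : ℕ) = i - j := by
  have hi := natCast_xor_two_pow_sub i p
  have hj := natCast_xor_two_pow_sub j p
  rw [testBit_eq_of_bits_apply_eq h] at hi
  linear_combination hi - hj

lemma natCast_val_add_single_sub_val {q m : ℕ} {y z : Fin m → ZMod 2} {p : Fin m}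
    (hp : y p = z p) (t : Fin m) :
    (((y + Pi.single p 1 : Fin m → ZMod 2) t).val : ZMod q) -
        ((z + Pi.single p 1 : Fin m → ZMod 2) t).val =
      (y t).val - (z t).val := by
  by_cases ht : t = p
  · subst ht
    simp [hp]
  · simp [ht]

section PathQuad

variable {m : ℕ}

def pathQuad (σ : ℕ → Fin m) (N : ℕ) (y : Fin m → ZMod 2) : ℕ :=
  ∑ α ∈ range (N - 1), (y (σ α)).val * (y (σ (α + 1))).val

lemma pathQuad_reverse (σ : ℕ → Fin m) (N : ℕ) :
    pathQuad (fun α => σ (N - 1 - α)) N = pathQuad σ N := by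
  funext y
  rw [pathQuad, pathQuad, ← sum_range_reflect]
  refine sum_congr rfl fun α hα => ?_
  rw [mem_range] at hα
  rw [show N - 1 - (N - 1 - 1 - α) = α + 1 by omega,
    show N - 1 - (N - 1 - 1 - α + 1) = α by omega, mul_comm]

lemma bijOn_reverse (N : ℕ) : Set.BijOn (fun α => N - 1 - α) (Set.Iio N) (Set.Iio N) := by
  have hmaps : Set.MapsTo (fun α => N - 1 - α) (Set.Iio N) (Set.Iio N) := fun α hα => by
    simp only [Set.mem_Iio] at hα ⊢
    omega
  refine Set.InvOn.bijOn ⟨fun α hα => ?_, fun α hα => ?_⟩ hmaps hmaps <;>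
    · simp only [Set.mem_Iio] at hα
      dsimp only
      omega

lemma exists_pathQuad_eq_of_endpoint {N : ℕ} {σ : ℕ → Fin m} (hσ : Set.InjOn σ (Set.Iio N))
    {a : Fin m} (ha : a = σ 0 ∨ a = σ (N - 1)) :
    ∃ τ : ℕ → Fin m, τ 0 = a ∧ Set.InjOn τ (Set.Iio N) ∧
      τ '' Set.Iio N = σ '' Set.Iio N ∧ pathQuad τ N = pathQuad σ N := by
  rcases ha with rfl | rfl
  · exact ⟨σ, rfl, hσ, rfl, rfl⟩
  · have hr := bijOn_reverse N
    refine ⟨fun α => σ (N - 1 - α), rfl, hσ.comp hr.injOn hr.mapsTo, ?_, pathQuad_reverse σ N⟩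
    rw [← Function.comp_def, Set.image_comp, hr.image_eq]

lemma natCast_pathQuad (σ : ℕ → Fin m) (N : ℕ) (y : Fin m → ZMod 2) :
    (pathQuad σ N y : ZMod 2) = ∑ α ∈ range (N - 1), y (σ α) * y (σ (α + 1)) := by
  simp [pathQuad]

lemma natCast_pathQuad_add_single {N A : ℕ} {σ : ℕ → Fin m} (hσ : Set.InjOn σ (Set.Iio N))
    (hA0 : 0 < A) (hAN : A < N) {y z : Fin m → ZMod 2}
    (hlt : ∀ β < A, y (σ β) = z (σ β)) (hA : y (σ A) ≠ z (σ A)) :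
    ((pathQuad σ N (y + Pi.single (σ (A - 1)) 1) +
        pathQuad σ N (z + Pi.single (σ (A - 1)) 1) : ℕ) : ZMod 2) =
      pathQuad σ N y + pathQuad σ N z + 1 := by
  set e : Fin m → ZMod 2 := Pi.single (σ (A - 1)) 1
  have he : ∀ α < N, e (σ α) = if α = A - 1 then 1 else 0 := fun α hα => by
    simp only [e, Pi.single_apply,
      hσ.eq_iff (Set.mem_Iio.2 hα) (Set.mem_Iio.2 (by omega : A - 1 < N))]
  have hsq : ∀ a b c d u v : ZMod 2,
      (a + u) * (b + v) + (c + u) * (d + v) = a * b + c * d + (u * (b + d) + v * (a + c)) := by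
    decide
  have h1 : ∑ α ∈ range (N - 1), e (σ α) * (y (σ (α + 1)) + z (σ (α + 1))) = 1 := by
    rw [sum_eq_single (A - 1)]
    · have hne : ∀ a b : ZMod 2, a ≠ b → a + b = 1 := by decide
      rw [he _ (by omega), if_pos rfl, one_mul, Nat.sub_add_cancel hA0, hne _ _ hA]
    · intro α hα hne
      rw [he _ (by simp at hα; omega), if_neg hne, zero_mul]
    · intro h
      exact absurd (mem_range.2 (by omega)) h
  have h2 : ∑ α ∈ range (N - 1), e (σ (α + 1)) * (y (σ α) + z (σ α)) = 0 := by
    refine sum_eq_zero fun α hα => ?_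
    rw [mem_range] at hα
    rw [he _ (by omega)]
    split_ifs with h
    · rw [hlt α (by omega), CharTwo.add_self_eq_zero, mul_zero]
    · rw [zero_mul]
  push_cast [natCast_pathQuad]
  simp only [← sum_add_distrib, Pi.add_apply, hsq]
  simp only [sum_add_distrib, h1, h2, add_zero]

end PathQuad

lemma eFun_eq (m k : ℕ) (jJ : Fin k → Fin m) (aD : (Fin k → ZMod 2) → Fin m)
    (y : Fin m → ZMod 2) : eFun m k jJ aD y = (y (aD (y ∘ jJ))).val := by
  rw [eFun, sum_eq_single (y ∘ jJ)]
  · have h1 : ∀ z : ZMod 2, z.val ^ z.val * (1 - z.val) ^ (1 - z.val) = 1 := by decide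
    simp [h1]
  · intro d _ hd
    obtain ⟨b, hb⟩ := Function.ne_iff.1 hd
    have h0 : ∀ z w : ZMod 2, z ≠ w → w.val ^ z.val * (1 - w.val) ^ (1 - z.val) = 0 := by
      decide
    rw [prod_eq_zero (mem_univ b) (h0 _ _ hb), mul_zero]
  · simp

lemma even_eFun_add_eFun_iff {m k : ℕ} (jJ : Fin k → Fin m) (aD : (Fin k → ZMod 2) → Fin m)
    {y z : Fin m → ZMod 2} (hJ : y ∘ jJ = z ∘ jJ) :
    Even (eFun m k jJ aD y + eFun m k jJ aD z) ↔ y (aD (y ∘ jJ)) = z (aD (y ∘ jJ)) := by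
  rw [eFun_eq, eFun_eq, ← hJ, ZMod.even_val_add_val_iff]

section Pivot

variable {m k : ℕ} (jJ : Fin k → Fin m) (ρ : (Fin k → ZMod 2) → ℕ → Fin m)

noncomputable def firstDiff (y z : Fin m → ZMod 2) : ℕ :=
  sInf {α | y (ρ (y ∘ jJ) α) ≠ z (ρ (y ∘ jJ) α)}

noncomputable def pivot (y z : Fin m → ZMod 2) : Fin m :=
  ρ (y ∘ jJ) (firstDiff jJ ρ y z - 1)

lemma add_single_comp_of_ne {y : Fin m → ZMod 2} {p : Fin m} (hp : ∀ b, jJ b ≠ p) :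
    (y + Pi.single p 1) ∘ jJ = y ∘ jJ :=
  funext fun b => by simp [hp b]

lemma pivot_add_single {y z : Fin m → ZMod 2} {p : Fin m} (hp : ∀ b, jJ b ≠ p) :
    pivot jJ ρ (y + Pi.single p 1) (z + Pi.single p 1) = pivot jJ ρ y z := by
  simp only [pivot, firstDiff, add_single_comp_of_ne jJ hp, Pi.add_apply, ne_eq, add_left_inj]

variable {N : ℕ} {jJ ρ}

lemma firstDiff_spec (hρcover : ∀ d v, (∀ b, jJ b ≠ v) → ∃ α < N, ρ d α = v)
    {y z : Fin m → ZMod 2} (hJ : y ∘ jJ = z ∘ jJ) (hne : y ≠ z)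
    (h0 : y (ρ (y ∘ jJ) 0) = z (ρ (y ∘ jJ) 0)) :
    0 < firstDiff jJ ρ y z ∧ firstDiff jJ ρ y z < N ∧
      (∀ β < firstDiff jJ ρ y z, y (ρ (y ∘ jJ) β) = z (ρ (y ∘ jJ) β)) ∧
      y (ρ (y ∘ jJ) (firstDiff jJ ρ y z)) ≠ z (ρ (y ∘ jJ) (firstDiff jJ ρ y z)) := by
  obtain ⟨v, hv⟩ := Function.ne_iff.1 hne
  have hvJ : ∀ b, jJ b ≠ v := fun b hb => hv (hb ▸ congrFun hJ b)
  obtain ⟨α, hαN, rfl⟩ := hρcover (y ∘ jJ) v hvJ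
  have hmem : firstDiff jJ ρ y z ∈ {α | y (ρ (y ∘ jJ) α) ≠ z (ρ (y ∘ jJ) α)} :=
    Nat.sInf_mem ⟨α, hv⟩
  exact ⟨Nat.pos_of_ne_zero fun h => hmem (h ▸ h0), (Nat.sInf_le hv).trans_lt hαN,
    fun β hβ => not_not.1 (Nat.notMem_of_lt_sInf hβ), hmem⟩

lemma pivot_spec (hρJ : ∀ d, ∀ α < N, ∀ b, jJ b ≠ ρ d α)
    (hρcover : ∀ d v, (∀ b, jJ b ≠ v) → ∃ α < N, ρ d α = v)
    {y z : Fin m → ZMod 2} (hJ : y ∘ jJ = z ∘ jJ) (hne : y ≠ z)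
    (h0 : y (ρ (y ∘ jJ) 0) = z (ρ (y ∘ jJ) 0)) :
    (∀ b, jJ b ≠ pivot jJ ρ y z) ∧ y (pivot jJ ρ y z) = z (pivot jJ ρ y z) := by
  obtain ⟨hA0, hAN, hlt, -⟩ := firstDiff_spec hρcover hJ hne h0
  exact ⟨hρJ _ _ (by omega), hlt _ (by omega)⟩

lemma stdAddChar_sub_add_single_pivot {q : ℕ} [NeZero q] (hq : Even q)
    (hρInj : ∀ d, Set.InjOn (ρ d) (Set.Iio N)) (hρJ : ∀ d, ∀ α < N, ∀ b, jJ b ≠ ρ d α)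
    (hρcover : ∀ d v, (∀ b, jJ b ≠ v) → ∃ α < N, ρ d α = v)
    {f : (Fin m → ZMod 2) → ZMod q} {L : (Fin k → ZMod 2) → (Fin m → ZMod 2) → ZMod q}
    (hf : ∀ y, f y =
      ((q / 2 : ℕ) : ZMod q) * (pathQuad (ρ (y ∘ jJ)) N y : ZMod q) + L (y ∘ jJ) y)
    (hL : ∀ d y z p, y p = z p →
      L d (y + Pi.single p 1) - L d (z + Pi.single p 1) = L d y - L d z)
    {y z : Fin m → ZMod 2} (hJ : y ∘ jJ = z ∘ jJ) (hne : y ≠ z)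
    (h0 : y (ρ (y ∘ jJ) 0) = z (ρ (y ∘ jJ) 0)) :
    stdAddChar (f (y + Pi.single (pivot jJ ρ y z) 1) - f (z + Pi.single (pivot jJ ρ y z) 1)) =
      -stdAddChar (f y - f z) := by
  obtain ⟨hA0, hAN, hlt, hA⟩ := firstDiff_spec hρcover hJ hne h0
  obtain ⟨hp, hpz⟩ := pivot_spec hρJ hρcover hJ hne h0
  rw [hf, hf (z + _), hf y, hf z, add_single_comp_of_ne jJ hp, add_single_comp_of_ne jJ hp, ← hJ]
  exact stdAddChar_half_mul_add_sub_of_parity hq (hL _ _ _ _ hpz)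
    (natCast_pathQuad_add_single (hρInj _) hA0 hAN hlt hA)

end Pivot

section Pairs

variable {m k : ℕ} (jJ : Fin k → Fin m) (ρ : (Fin k → ZMod 2) → ℕ → Fin m)

noncomputable def corrPairs (aD : (Fin k → ZMod 2) → Fin m) (ℓ : ℤ) : Finset (ℕ × ℕ) :=
  (range (2 ^ m) ×ˢ range (2 ^ m)).filter fun ij =>
    (ij.1 : ℤ) = ij.2 + ℓ ∧ bits m ij.1 ∘ jJ = bits m ij.2 ∘ jJ ∧
      Even (eFun m k jJ aD (bits m ij.1) + eFun m k jJ aD (bits m ij.2))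

noncomputable def flipPair (ij : ℕ × ℕ) : ℕ × ℕ :=
  (ij.1 ^^^ 2 ^ (pivot jJ ρ (bits m ij.1) (bits m ij.2) : ℕ),
    ij.2 ^^^ 2 ^ (pivot jJ ρ (bits m ij.1) (bits m ij.2) : ℕ))

lemma bits_flipPair_fst (ij : ℕ × ℕ) :
    bits m (flipPair jJ ρ ij).1 =
      bits m ij.1 + Pi.single (pivot jJ ρ (bits m ij.1) (bits m ij.2)) 1 :=
  bits_xor_two_pow _ _ _

lemma bits_flipPair_snd (ij : ℕ × ℕ) :
    bits m (flipPair jJ ρ ij).2 =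
      bits m ij.2 + Pi.single (pivot jJ ρ (bits m ij.1) (bits m ij.2)) 1 :=
  bits_xor_two_pow _ _ _

lemma flipPair_ne (ij : ℕ × ℕ) : flipPair jJ ρ ij ≠ ij := fun h => by
  have := congrFun (bits_flipPair_fst jJ ρ ij) (pivot jJ ρ (bits m ij.1) (bits m ij.2))
  rw [h] at this
  simp at this

variable {jJ ρ}

lemma flipPair_flipPair {ij : ℕ × ℕ}
    (hp : ∀ b, jJ b ≠ pivot jJ ρ (bits m ij.1) (bits m ij.2)) :
    flipPair jJ ρ (flipPair jJ ρ ij) = ij := by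
  rw [flipPair, bits_flipPair_fst, bits_flipPair_snd, pivot_add_single jJ ρ hp, flipPair,
    Nat.xor_assoc, Nat.xor_self, Nat.xor_zero, Nat.xor_assoc, Nat.xor_self, Nat.xor_zero]

lemma flipPair_mem_corrPairs {aD : (Fin k → ZMod 2) → Fin m} {ℓ : ℤ} {ij : ℕ × ℕ}
    (h : ij ∈ corrPairs jJ aD ℓ) (hp : ∀ b, jJ b ≠ pivot jJ ρ (bits m ij.1) (bits m ij.2))
    (hpz : bits m ij.1 (pivot jJ ρ (bits m ij.1) (bits m ij.2)) =
      bits m ij.2 (pivot jJ ρ (bits m ij.1) (bits m ij.2))) :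
    flipPair jJ ρ ij ∈ corrPairs jJ aD ℓ := by
  simp only [corrPairs, mem_filter, mem_product, mem_range] at h ⊢
  obtain ⟨⟨hi, hj⟩, hℓ, hJ, hE⟩ := h
  have hpm := Nat.pow_lt_pow_right one_lt_two (pivot jJ ρ (bits m ij.1) (bits m ij.2)).isLt
  have hJ' : (bits m ij.1 + Pi.single (pivot jJ ρ (bits m ij.1) (bits m ij.2)) 1) ∘ jJ =
      (bits m ij.2 + Pi.single (pivot jJ ρ (bits m ij.1) (bits m ij.2)) 1) ∘ jJ := by
    rw [add_single_comp_of_ne jJ hp, add_single_comp_of_ne jJ hp, hJ]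
  rw [even_eFun_add_eFun_iff jJ aD hJ] at hE
  rw [bits_flipPair_fst, bits_flipPair_snd, even_eFun_add_eFun_iff jJ aD hJ']
  refine ⟨⟨Nat.xor_lt_two_pow hi hpm, Nat.xor_lt_two_pow hj hpm⟩, ?_, hJ', ?_⟩
  · have := natCast_xor_two_pow_sub_xor_two_pow hpz
    simp only [flipPair]
    linarith
  · simp [add_single_comp_of_ne jJ hp, hE]

lemma corrPairs_spec {aD : (Fin k → ZMod 2) → Fin m} (hρ0 : ∀ d, ρ d 0 = aD d) {ℓ : ℤ}
    (hℓ : ℓ ≠ 0) {ij : ℕ × ℕ} (h : ij ∈ corrPairs jJ aD ℓ) :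
    bits m ij.1 ∘ jJ = bits m ij.2 ∘ jJ ∧ bits m ij.1 ≠ bits m ij.2 ∧
      bits m ij.1 (ρ (bits m ij.1 ∘ jJ) 0) = bits m ij.2 (ρ (bits m ij.1 ∘ jJ) 0) := by
  simp only [corrPairs, mem_filter, mem_product, mem_range] at h
  obtain ⟨⟨hi, hj⟩, hij, hJ, hE⟩ := h
  refine ⟨hJ, fun heq => hℓ ?_, ?_⟩
  · rw [eq_of_bits_eq hi hj heq] at hij
    omega
  · rw [hρ0]
    exact (even_eFun_add_eFun_iff jJ aD hJ).1 hE

theorem sum_corrPairs_eq_zero {q N : ℕ} [NeZero q] (hq : Even q)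
    (hρInj : ∀ d, Set.InjOn (ρ d) (Set.Iio N)) (hρJ : ∀ d, ∀ α < N, ∀ b, jJ b ≠ ρ d α)
    (hρcover : ∀ d v, (∀ b, jJ b ≠ v) → ∃ α < N, ρ d α = v)
    {aD : (Fin k → ZMod 2) → Fin m} (hρ0 : ∀ d, ρ d 0 = aD d)
    {f : (Fin m → ZMod 2) → ZMod q} {L : (Fin k → ZMod 2) → (Fin m → ZMod 2) → ZMod q}
    (hf : ∀ y, f y =
      ((q / 2 : ℕ) : ZMod q) * (pathQuad (ρ (y ∘ jJ)) N y : ZMod q) + L (y ∘ jJ) y)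
    (hL : ∀ d y z p, y p = z p →
      L d (y + Pi.single p 1) - L d (z + Pi.single p 1) = L d y - L d z)
    {ℓ : ℤ} (hℓ : ℓ ≠ 0) :
    ∑ ij ∈ corrPairs jJ aD ℓ, stdAddChar (f (bits m ij.1) - f (bits m ij.2)) = 0 := by
  have hpivot : ∀ ij ∈ corrPairs jJ aD ℓ,
      (∀ b, jJ b ≠ pivot jJ ρ (bits m ij.1) (bits m ij.2)) ∧
        bits m ij.1 (pivot jJ ρ (bits m ij.1) (bits m ij.2)) =
          bits m ij.2 (pivot jJ ρ (bits m ij.1) (bits m ij.2)) := fun ij h =>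
    let ⟨hJ, hne, h0⟩ := corrPairs_spec hρ0 hℓ h
    pivot_spec hρJ hρcover hJ hne h0
  refine sum_involution (fun ij _ => flipPair jJ ρ ij) (fun ij h => ?_)
    (fun ij _ _ => flipPair_ne jJ ρ ij)
    (fun ij h => flipPair_mem_corrPairs h (hpivot ij h).1 (hpivot ij h).2)
    (fun ij h => flipPair_flipPair (hpivot ij h).1)
  obtain ⟨hJ, hne, h0⟩ := corrPairs_spec hρ0 hℓ h
  rw [bits_flipPair_fst, bits_flipPair_snd,
    stdAddChar_sub_add_single_pivot hq hρInj hρJ hρcover hf hL hJ hne h0, add_neg_cancel]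

end Pairs

lemma crossCorr_eq_sum_filter (n : ℕ) (A B : ℕ → ℂ) (ℓ : ℤ) :
    crossCorr n A B ℓ =
      ∑ ij ∈ (range n ×ˢ range n).filter (fun ij => (ij.1 : ℤ) = ij.2 + ℓ),
        A ij.1 * conj (B ij.2) := by
  rw [crossCorr, sum_filter, sum_product]

lemma sum_autoCorr_eq_sum_corrPairs {q m k : ℕ} [NeZero q] (hq : Even q)
    (f : (Fin m → ZMod 2) → ZMod q) (jJ : Fin k → Fin m) (aD : (Fin k → ZMod 2) → Fin m)
    (ℓ : ℤ) :
    ∑ cc : Fin k → ZMod 2, ∑ c' : ZMod 2,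
      autoCorr (2 ^ m)
        (polyVec m (fun y => f y + ((q / 2 : ℕ) : ZMod q) *
          (((∑ α : Fin k, (cc α).val * (y (jJ α)).val) + c'.val * eFun m k jJ aD y : ℕ) : ZMod q)))
        ℓ =
      2 ^ (k + 1) * ∑ ij ∈ corrPairs jJ aD ℓ, stdAddChar (f (bits m ij.1) - f (bits m ij.2)) := by
  simp only [autoCorr, crossCorr_eq_sum_filter, polyVec_apply]
  rw [sum_congr rfl fun cc _ => sum_comm, sum_comm,
    sum_congr rfl fun ij _ => sum_stdAddChar_add_half_mul_mul_conj hq _ _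
      (fun α => bits m ij.1 (jJ α)) (fun α => bits m ij.2 (jJ α)) _ _,
    ← sum_filter, filter_filter, mul_sum]
  rfl

theorem stmt_3_general (q m k : ℕ) (hq : Even q) (hq1 : 0 < q)
    (iI : ℕ → Fin m) (jJ : Fin k → Fin m)
    (hdisj : ∀ a < m - k, ∀ b : Fin k, iI a ≠ jJ b)
    (hcover : ∀ v : Fin m, (∃ a < m - k, iI a = v) ∨ ∃ b : Fin k, jJ b = v)
    (f : (Fin m → ZMod 2) → ZMod q)
    (π : (Fin k → ZMod 2) → ℕ → Fin m)
    (hπInj : ∀ d, Set.InjOn (π d) (Set.Iio (m - k)))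
    (hπrange : ∀ d, (π d) '' Set.Iio (m - k) = iI '' Set.Iio (m - k))
    (c : (Fin k → ZMod 2) → ℕ → ZMod q) (c0 : (Fin k → ZMod 2) → ZMod q)
    (hf : ∀ d : Fin k → ZMod 2, ∀ y : Fin m → ZMod 2, (∀ b : Fin k, y (jJ b) = d b) →
      f y = ((q / 2 : ℕ) : ZMod q) *
              ((∑ α ∈ Finset.range (m - k - 1),
                  (y (π d α)).val * (y (π d (α + 1))).val : ℕ) : ZMod q)
            + (∑ α ∈ Finset.range (m - k), c d α * ((y (iI α)).val : ZMod q)) + c0 d)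
    (aD : (Fin k → ZMod 2) → Fin m)
    (haD : ∀ d, aD d = π d 0 ∨ aD d = π d (m - k - 1))
    (ℓ : ℤ) (hℓ : ℓ ≠ 0) :
    ∑ cc : Fin k → ZMod 2, ∑ c' : ZMod 2,
      autoCorr (2 ^ m)
        (polyVec m (fun y => f y + ((q / 2 : ℕ) : ZMod q) *
          (((∑ α : Fin k, (cc α).val * (y (jJ α)).val) + c'.val * eFun m k jJ aD y : ℕ) : ZMod q)))
        ℓ = 0 := by
  have : NeZero q := ⟨hq1.ne'⟩
  choose ρ hρ0 hρInj hρrange hρQ using fun d => exists_pathQuad_eq_of_endpoint (hπInj d) (haD d)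
  have hρJ : ∀ d, ∀ α < m - k, ∀ b, jJ b ≠ ρ d α := fun d α hα b hb => by
    obtain ⟨a, ha, hav⟩ : ρ d α ∈ iI '' Set.Iio (m - k) := by
      rw [← hπrange d, ← hρrange d]
      exact ⟨α, hα, rfl⟩
    exact hdisj a ha b (hav.trans hb.symm)
  have hρcover : ∀ d v, (∀ b, jJ b ≠ v) → ∃ α < m - k, ρ d α = v := fun d v hv => by
    obtain ⟨a, ha, rfl⟩ := (hcover v).resolve_right fun ⟨b, hb⟩ => hv b hb
    obtain ⟨α, hα, hαa⟩ : iI a ∈ ρ d '' Set.Iio (m - k) := by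
      rw [hρrange, hπrange]
      exact ⟨a, ha, rfl⟩
    exact ⟨α, hα, hαa⟩
  rw [sum_autoCorr_eq_sum_corrPairs hq, sum_corrPairs_eq_zero hq hρInj hρJ hρcover hρ0
    (L := fun d y => ∑ α ∈ range (m - k), c d α * ((y (iI α)).val : ZMod q) + c0 d)
    (fun y => by rw [hf (y ∘ jJ) y fun _ => rfl, hρQ, add_assoc]; rfl) (fun d y z p hp => ?_) hℓ,
    mul_zero]
  simp only [add_sub_add_right_eq_sub, ← sum_sub_distrib, ← mul_sub,
    natCast_val_add_single_sub_val hp]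

/-- Theorem 2: if every restriction `f|_{x=d}` has the form
`(q/2)·∑_α x_{π_d(α)}x_{π_d(α+1)} + ∑_α c_{d,α} x_{i_α} + c_d`, with `a_d = π_d(0)` or
`π_d(m-k-1)`, then the `2^{k+1}` polyphase vectors associated with the functions
`f + (q/2)(∑_α c_α x_{j_α} + c'·e)`, as `(c, c')` ranges over `ℤ₂^{k+1}`, form a
complementary set of size `2^{k+1}`. -/
theorem stmt_3 (q m k : ℕ) (hq : Even q) (hq1 : 0 < q) (hkm : k ≤ m)
    (iI : ℕ → Fin m) (jJ : Fin k → Fin m)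
    (hiInj : Set.InjOn iI (Set.Iio (m - k))) (hjInj : Function.Injective jJ)
    (hdisj : ∀ a < m - k, ∀ b : Fin k, iI a ≠ jJ b)
    (hcover : ∀ v : Fin m, (∃ a < m - k, iI a = v) ∨ ∃ b : Fin k, jJ b = v)
    (f : (Fin m → ZMod 2) → ZMod q)
    (π : (Fin k → ZMod 2) → ℕ → Fin m)
    (hπInj : ∀ d, Set.InjOn (π d) (Set.Iio (m - k)))
    (hπrange : ∀ d, (π d) '' Set.Iio (m - k) = iI '' Set.Iio (m - k))
    (c : (Fin k → ZMod 2) → ℕ → ZMod q) (c0 : (Fin k → ZMod 2) → ZMod q)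
    (hf : ∀ d : Fin k → ZMod 2, ∀ y : Fin m → ZMod 2, (∀ b : Fin k, y (jJ b) = d b) →
      f y = ((q / 2 : ℕ) : ZMod q) *
              ((∑ α ∈ Finset.range (m - k - 1),
                  (y (π d α)).val * (y (π d (α + 1))).val : ℕ) : ZMod q)
            + (∑ α ∈ Finset.range (m - k), c d α * ((y (iI α)).val : ZMod q)) + c0 d)
    (aD : (Fin k → ZMod 2) → Fin m)
    (haD : ∀ d, aD d = π d 0 ∨ aD d = π d (m - k - 1))
    (ℓ : ℤ) (hℓ : ℓ ≠ 0) :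
    ∑ cc : Fin k → ZMod 2, ∑ c' : ZMod 2,
      autoCorr (2 ^ m)
        (polyVec m (fun y => f y + ((q / 2 : ℕ) : ZMod q) *
          (((∑ α : Fin k, (cc α).val * (y (jJ α)).val) + c'.val * eFun m k jJ aD y : ℕ) : ZMod q)))
        ℓ = 0 :=
  stmt_3_general q m k hq hq1 iI jJ hdisj hcover f π hπInj hπrange c c0 hf aD haD ℓ hℓ
end

section
/- Let q be even and let f : Z_2^m → Z_q be a generalized Boolean function. Suppose there exists a set of k variables x = (x_{j_0},...,x_{j_{k-1}}) (with complementary index set I = {i_0,...,i_{m-k-1}}) such that for each d ∈ Z_2^k the restricted function f|_{x=d} equals (q/2)·Σ_{α=0}^{m-k-2} x_{π_d(α)} x_{π_d(α+1)} + Σ_{α=0}^{m-k-1} c_{d,α} x_{i_α} + c_d for some bijection π_d from {0,...,m-k-1} onto I and constants c_{d,α}, c_d ∈ Z_q. Then the PMEPR of the polyphase vector F associated with f is at most 2^{k+1}: sup_{0 ≤ t < T} |Σ_{i=0}^{2^m-1} F_i e^{2π√(-1)(f_c + i/T)t}|² ≤ 2^{k+1}·2^m. -/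
/-! Writing `z = e^{2π√-1·t/T}`, the envelope is the norm of `∑_y ξ^{f y} ∏_p (z^{2^p})^{y_p}`, a sum
over the cube weighted by unimodular numbers. Fixing the `k` variables `x = d` splits it into `2^k`
partial sums. On each of them, after listing the free variables in the order `π_d` and absorbing
the linear part of `f` into the weights, `f` is the path form `(q/2)·∑ u_α u_{α+1}`. For any
unimodular weights, a path sum `S` in `n` variables and its companion `S'` (first weight negated)
form a Golay complementary pair, `|S|² + |S'|² = 2^{n+1}`, by induction on `n` and the
parallelogram law. So each partial sum has `|S|² ≤ 2^{m-k+1}`, and Cauchy–Schwarz over the `2^k`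
partial sums gives `2^k · 2^k · 2^{m-k+1} = 2^{k+1} · 2^m`. -/

open Finset

open Function

lemma AddChar.map_finset_sum {ι A M : Type*} [AddCommMonoid A] [CommMonoid M] (ψ : AddChar A M)
    (s : Finset ι) (g : ι → A) : ψ (∑ i ∈ s, g i) = ∏ i ∈ s, ψ (g i) := by
  induction s using Finset.cons_induction with
  | empty => simp
  | cons a s ha ih => rw [sum_cons, prod_cons, ψ.map_add_eq_mul, ih]

lemma AddChar.map_mul_natCast {R M : Type*} [Semiring R] [Monoid M] (ψ : AddChar R M) (a : R)
    (N : ℕ) : ψ (a * N) = ψ a ^ N := by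
  rw [(Nat.cast_commute N a).symm.eq, ← nsmul_eq_mul, ψ.map_nsmul_eq_pow]

lemma ZMod.stdAddChar_half {q : ℕ} [NeZero q] (hq : Even q) :
    ZMod.stdAddChar ((q / 2 : ℕ) : ZMod q) = -1 := by
  obtain ⟨r, rfl⟩ := hq
  have hr : (r : ℂ) ≠ 0 := Nat.cast_ne_zero.mpr fun h => NeZero.ne (r + r) (by simp [h])
  rw [ZMod.stdAddChar_apply, ZMod.toCircle_natCast, ← Complex.exp_pi_mul_I, ← two_mul,
    Nat.mul_div_cancel_left _ two_pos]
  congr 1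
  push_cast
  field_simp

lemma bits_finFunctionFinEquiv {m : ℕ} (v : Fin m → ZMod 2) :
    bits m (finFunctionFinEquiv (m := 2) v) = v := by
  funext p
  have hv : (v p).val = (finFunctionFinEquiv (m := 2) v : ℕ) / 2 ^ (p : ℕ) % 2 := by
    rw [← finFunctionFinEquiv_symm_apply_val, finFunctionFinEquiv.symm_apply_apply v]
    rfl
  rw [bits, Nat.testBit_eq_decide_div_mod_eq, ← hv]
  generalize v p = b
  revert b
  decide

lemma sum_range_two_pow_mul_pow {R : Type*} [CommSemiring R] (m : ℕ)
    (g : (Fin m → ZMod 2) → R) (z : R) :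
    ∑ i ∈ range (2 ^ m), g (bits m i) * z ^ i
      = ∑ v : Fin m → ZMod 2, g v * ∏ p : Fin m, (z ^ 2 ^ (p : ℕ)) ^ (v p).val := by
  rw [← Fin.sum_univ_eq_sum_range (fun i => g (bits m i) * z ^ i)]
  refine (Fintype.sum_bijective (fun v : Fin m → ZMod 2 => finFunctionFinEquiv (m := 2) v)
    finFunctionFinEquiv.bijective _ _ fun v => ?_).symm
  have hv : (finFunctionFinEquiv (m := 2) v : ℕ) = ∑ p, (v p).val * 2 ^ (p : ℕ) :=
    finFunctionFinEquiv_apply v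
  rw [bits_finFunctionFinEquiv, hv, ← prod_pow_eq_pow_sum]
  simp only [← pow_mul, mul_comm]

def pathForm {n : ℕ} (u : Fin n → ZMod 2) : ℕ :=
  ∑ i : Fin (n - 1),
    (u ⟨i, Nat.lt_of_lt_pred i.isLt⟩).val * (u ⟨i + 1, Nat.add_lt_of_lt_sub i.isLt⟩).val

lemma pathForm_eq_sum_range {n : ℕ} (a : ℕ → ZMod 2) :
    pathForm (fun α : Fin n => a α) = ∑ α ∈ range (n - 1), (a α).val * (a (α + 1)).val :=
  Fin.sum_univ_eq_sum_range (fun α => (a α).val * (a (α + 1)).val) (n - 1)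

lemma pathForm_cons {n : ℕ} (b : ZMod 2) (u : Fin (n + 1) → ZMod 2) :
    pathForm (Fin.cons b u : Fin (n + 2) → ZMod 2) = b.val * (u 0).val + pathForm u := by
  show ∑ i : Fin (n + 1), _ = _
  rw [Fin.sum_univ_succ]
  rfl

lemma pathForm_cons_zero {n : ℕ} (u : Fin n → ZMod 2) :
    pathForm (Fin.cons 0 u : Fin (n + 1) → ZMod 2) = pathForm u := by
  cases n with
  | zero => rfl
  | succ n => simp [pathForm_cons]

lemma prod_pow_val_cons {n : ℕ} (w : ℕ → ℂ) (b : ZMod 2) (u : Fin n → ZMod 2) :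
    ∏ α : Fin (n + 1), w α ^ ((Fin.cons b u : Fin (n + 1) → ZMod 2) α).val
      = w 0 ^ b.val * ∏ α : Fin n, w (α + 1) ^ (u α).val := by
  simp [Fin.prod_univ_succ]

lemma ZMod.sum_univ_two {M : Type*} [AddCommMonoid M] (g : ZMod 2 → M) :
    ∑ b, g b = g 0 + g 1 :=
  Fin.sum_univ_two g

noncomputable def pathSum (n : ℕ) (w : ℕ → ℂ) : ℂ :=
  ∑ u : Fin n → ZMod 2, (-1 : ℂ) ^ pathForm u * ∏ α : Fin n, w α ^ (u α).val

lemma pathSum_zero (w : ℕ → ℂ) : pathSum 0 w = 1 := by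
  simp [pathSum, pathForm]

/- Split off the first bit `u₀`: when `u₀ = 1`, the term `u₀ u₁` of the path form turns into the
sign of the next weight. -/
lemma pathSum_succ (n : ℕ) (w : ℕ → ℂ) :
    pathSum (n + 1) w = pathSum n (fun α => w (α + 1)) +
      w 0 * pathSum n (update (fun α => w (α + 1)) 0 (-w 1)) := by
  rw [pathSum, ← (Fin.consEquiv fun _ => ZMod 2).sum_comp, Fintype.sum_prod_type,
    ZMod.sum_univ_two, pathSum, pathSum, mul_sum]
  congr 1
  · refine sum_congr rfl fun u _ => ?_
    change (-1 : ℂ) ^ pathForm (Fin.cons 0 u : Fin (n + 1) → ZMod 2) * _ = _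
    rw [pathForm_cons_zero]
    simp [prod_pow_val_cons]
  · refine sum_congr rfl fun u _ => ?_
    change (-1 : ℂ) ^ pathForm (Fin.cons 1 u : Fin (n + 1) → ZMod 2) *
      ∏ α : Fin (n + 1), w α ^ ((Fin.cons 1 u : Fin (n + 1) → ZMod 2) α).val = _
    have h1 : (1 : ZMod 2).val = 1 := rfl
    cases n with
    | zero => simp [pathForm, h1]
    | succ n =>
      rw [pathForm_cons, prod_pow_val_cons, h1, Fin.prod_univ_succ, Fin.prod_univ_succ]
      simp only [Fin.val_zero, update_self, Fin.val_succ, zero_add, one_mul, pow_one,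
        update_of_ne (Nat.succ_ne_zero _), neg_pow (w 1), pow_add]
      ring

lemma norm_sq_pathSum_add_norm_sq_pathSum_update (n : ℕ) (w : ℕ → ℂ) (hw : ∀ α, ‖w α‖ = 1) :
    ‖pathSum n w‖ ^ 2 + ‖pathSum n (update w 0 (-w 0))‖ ^ 2 = 2 ^ (n + 1) := by
  induction n generalizing w with
  | zero => norm_num [pathSum_zero]
  | succ n ih =>
    have htail : (fun α => update w 0 (-w 0) (α + 1)) = fun α => w (α + 1) :=
      funext fun α => update_of_ne (Nat.succ_ne_zero α) _ _
    rw [pathSum_succ, pathSum_succ, htail, update_self, update_of_ne one_ne_zero, neg_mul,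
      ← sub_eq_add_neg, parallelogram_law_with_norm ℝ, norm_mul, hw, one_mul,
      ih _ fun α => hw _, pow_succ _ (n + 1)]
    ring

lemma norm_sq_pathSum_le (n : ℕ) (w : ℕ → ℂ) (hw : ∀ α, ‖w α‖ = 1) :
    ‖pathSum n w‖ ^ 2 ≤ 2 ^ (n + 1) := by
  rw [← norm_sq_pathSum_add_norm_sq_pathSum_update n w hw]
  exact le_add_of_nonneg_right (sq_nonneg _)

lemma sum_range_comp_eq_of_image_eq {β M : Type*} [AddCommMonoid M] {g g' : ℕ → β} {n : ℕ}
    (hg : Set.InjOn g (Set.Iio n)) (hg' : Set.InjOn g' (Set.Iio n))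
    (h : g '' Set.Iio n = g' '' Set.Iio n) (φ : β → M) :
    ∑ α ∈ range n, φ (g α) = ∑ α ∈ range n, φ (g' α) := by
  classical
  rw [← sum_image (s := range n) (g := g) (by simpa using hg),
    ← sum_image (s := range n) (g := g') (by simpa using hg')]
  congr 1
  exact coe_injective (by simpa using h)

lemma AddChar.apply_pathForm_add_linear {q n : ℕ} {β : Type*} (ψ : AddChar (ZMod q) ℂ)
    (hψ : ψ ((q / 2 : ℕ) : ZMod q) = -1) {iI π : ℕ → β} (hiI : Set.InjOn iI (Set.Iio n))
    (hπ : Set.InjOn π (Set.Iio n)) (hrange : π '' Set.Iio n = iI '' Set.Iio n)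
    (c : ℕ → ZMod q) (c0 : ZMod q) (y : β → ZMod 2) :
    ψ (((q / 2 : ℕ) : ZMod q) *
          ((∑ α ∈ range (n - 1), (y (π α)).val * (y (π (α + 1))).val : ℕ) : ZMod q)
        + (∑ α ∈ range n, c α * ((y (iI α)).val : ZMod q)) + c0)
      = (-1) ^ pathForm (fun α : Fin n => y (π α)) *
          (∏ α : Fin n, ψ (c (invFunOn iI (Set.Iio n) (π α))) ^ (y (π α)).val) * ψ c0 := by
  set ℓ := fun p => c (invFunOn iI (Set.Iio n) p)
  have hlin : ∑ α ∈ range n, c α * ((y (iI α)).val : ZMod q)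
      = ∑ α ∈ range n, ℓ (π α) * ((y (π α)).val : ZMod q) := by
    rw [← sum_range_comp_eq_of_image_eq hiI hπ hrange.symm fun p => ℓ p * ((y p).val : ZMod q)]
    refine sum_congr rfl fun α hα => ?_
    simp only [ℓ, hiI.leftInvOn_invFunOn (by simpa using hα)]
  rw [ψ.map_add_eq_mul, ψ.map_add_eq_mul, ψ.map_mul_natCast, hψ, hlin, ψ.map_finset_sum,
    ← pathForm_eq_sum_range (n := n) (fun α => y (π α)),
    ← Fin.prod_univ_eq_prod_range (fun α => ψ (ℓ (π α) * _))]
  simp only [ψ.map_mul_natCast, ℓ]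

lemma sumElim_bijective {β κ : Type*} {g : ℕ → β} {j : κ → β} {n : ℕ}
    (hg : Set.InjOn g (Set.Iio n)) (hj : Injective j)
    (hdisj : Disjoint (g '' Set.Iio n) (Set.range j))
    (hcover : ∀ v, v ∈ g '' Set.Iio n ∨ v ∈ Set.range j) :
    Bijective (Sum.elim (fun a : Fin n => g a) j) := by
  refine ⟨?_, fun v => ?_⟩
  · rintro (a | b) (a' | b') h
    · exact congrArg _ (Fin.ext (hg a.isLt a'.isLt h))
    · exact (Set.disjoint_left.mp hdisj ⟨a, a.isLt, rfl⟩ ⟨b', h.symm⟩).elim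
    · exact (Set.disjoint_left.mp hdisj ⟨a', a'.isLt, rfl⟩ ⟨b, h⟩).elim
    · exact congrArg _ (hj h)
  · rcases hcover v with ⟨a, ha, rfl⟩ | ⟨b, rfl⟩
    · exact ⟨.inl ⟨a, ha⟩, rfl⟩
    · exact ⟨.inr b, rfl⟩

lemma Fintype.prod_eq_prod_mul_prod_of_sumElim_bijective {ι κ β M : Type*} [Fintype ι]
    [Fintype κ] [Fintype β] [CommMonoid M] {g : ι → β} {j : κ → β}
    (h : Bijective (Sum.elim g j)) (F : β → M) :
    ∏ p, F p = (∏ a, F (g a)) * ∏ b, F (j b) := by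
  rw [← Fintype.prod_bijective _ h (fun s => F (Sum.elim g j s)) F fun _ => rfl,
    Fintype.prod_sum_type]
  rfl

section Gluing

variable {ι κ μ R : Type*}

lemma Equiv.ofBijective_sumElim_symm_inl {f : ι → μ} {j : κ → μ} (h : Bijective (Sum.elim f j))
    (a : ι) : (Equiv.ofBijective _ h).symm (f a) = .inl a :=
  (Equiv.ofBijective _ h).symm_apply_eq.mpr rfl

lemma Equiv.ofBijective_sumElim_symm_inr {f : ι → μ} {j : κ → μ} (h : Bijective (Sum.elim f j))
    (b : κ) : (Equiv.ofBijective _ h).symm (j b) = .inr b :=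
  (Equiv.ofBijective _ h).symm_apply_eq.mpr rfl

variable (g : (κ → R) → ι → μ) (j : κ → μ) (hg : ∀ d, Bijective (Sum.elim (g d) j))

/- The coordinates `g d` complementary to `j` depend on the values `d` read on `j`; still, a
point of `μ → R` is determined by `d` together with its values on `g d`. -/
noncomputable def gluingEquiv : (κ → R) × (ι → R) ≃ (μ → R) where
  toFun x p := Sum.elim x.2 x.1 ((Equiv.ofBijective _ (hg x.1)).symm p)
  invFun y := (y ∘ j, y ∘ g (y ∘ j))
  left_inv := by
    rintro ⟨d, u⟩
    have hjd : (fun p => Sum.elim u d ((Equiv.ofBijective _ (hg d)).symm p)) ∘ j = d :=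
      funext fun b => by simp [Equiv.ofBijective_sumElim_symm_inr]
    ext a <;> simp [hjd, Equiv.ofBijective_sumElim_symm_inl, Equiv.ofBijective_sumElim_symm_inr]
  right_inv y := by
    funext p
    obtain ⟨s, rfl⟩ := (hg (y ∘ j)).surjective p
    cases s <;> simp [Equiv.ofBijective_sumElim_symm_inl, Equiv.ofBijective_sumElim_symm_inr]

lemma gluingEquiv_apply_left (d : κ → R) (u : ι → R) (a : ι) :
    gluingEquiv g j hg (d, u) (g d a) = u a := by
  simp [gluingEquiv, Equiv.ofBijective_sumElim_symm_inl]

lemma gluingEquiv_apply_right (d : κ → R) (u : ι → R) (b : κ) :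
    gluingEquiv g j hg (d, u) (j b) = d b := by
  simp [gluingEquiv, Equiv.ofBijective_sumElim_symm_inr]

end Gluing

lemma norm_sum_sq_le_card_sq_mul {ι E : Type*} [Fintype ι] [SeminormedAddCommGroup E]
    (x : ι → E) {B : ℝ} (h : ∀ i, ‖x i‖ ^ 2 ≤ B) :
    ‖∑ i, x i‖ ^ 2 ≤ (Fintype.card ι : ℝ) ^ 2 * B := by
  calc ‖∑ i, x i‖ ^ 2 ≤ (∑ i, ‖x i‖) ^ 2 := by gcongr; exact norm_sum_le _ _
    _ ≤ Fintype.card ι * ∑ i, ‖x i‖ ^ 2 := sq_sum_le_card_mul_sum_sq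
    _ ≤ Fintype.card ι * (Fintype.card ι * B) := by
      gcongr
      simpa using sum_le_sum fun i (_ : i ∈ univ) => h i
    _ = (Fintype.card ι : ℝ) ^ 2 * B := by ring

theorem norm_sq_sum_addChar_mul_prod_le {q m k : ℕ} [NeZero q] (ψ : AddChar (ZMod q) ℂ)
    (hψ : ψ ((q / 2 : ℕ) : ZMod q) = -1) (hkm : k ≤ m)
    (iI : ℕ → Fin m) (jJ : Fin k → Fin m)
    (hiInj : Set.InjOn iI (Set.Iio (m - k))) (hjInj : Injective jJ)
    (hdisj : ∀ a < m - k, ∀ b : Fin k, iI a ≠ jJ b)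
    (hcover : ∀ v : Fin m, (∃ a < m - k, iI a = v) ∨ ∃ b : Fin k, jJ b = v)
    (f : (Fin m → ZMod 2) → ZMod q)
    (π : (Fin k → ZMod 2) → ℕ → Fin m)
    (hπInj : ∀ d, Set.InjOn (π d) (Set.Iio (m - k)))
    (hπrange : ∀ d, (π d) '' Set.Iio (m - k) = iI '' Set.Iio (m - k))
    (c : (Fin k → ZMod 2) → ℕ → ZMod q) (c0 : (Fin k → ZMod 2) → ZMod q)
    (hf : ∀ d : Fin k → ZMod 2, ∀ y : Fin m → ZMod 2, (∀ b : Fin k, y (jJ b) = d b) →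
      f y = ((q / 2 : ℕ) : ZMod q) *
              ((∑ α ∈ range (m - k - 1), (y (π d α)).val * (y (π d (α + 1))).val : ℕ) : ZMod q)
            + (∑ α ∈ range (m - k), c d α * ((y (iI α)).val : ZMod q)) + c0 d)
    (ζ : Fin m → ℂ) (hζ : ∀ p, ‖ζ p‖ = 1) :
    ‖∑ y : Fin m → ZMod 2, ψ (f y) * ∏ p, ζ p ^ (y p).val‖ ^ 2
      ≤ (2 : ℝ) ^ (k + 1) * (2 : ℝ) ^ m := by
  classical
  set n := m - k
  have hdisj' : Disjoint (iI '' Set.Iio n) (Set.range jJ) :=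
    Set.disjoint_left.mpr fun _ ⟨a, ha, e⟩ ⟨b, e'⟩ => hdisj a ha b (e.trans e'.symm)
  have hbij : ∀ d, Bijective (Sum.elim (fun a : Fin n => π d a) jJ) := fun d =>
    sumElim_bijective (hπInj d) hjInj (hπrange d ▸ hdisj') (hπrange d ▸ hcover)
  let glue := gluingEquiv (fun d (a : Fin n) => π d a) jJ hbij
  let w d α := ψ (c d (invFunOn iI (Set.Iio n) (π d α))) * ζ (π d α)
  have hfiber : ∀ d u, ψ (f (glue (d, u))) * ∏ p, ζ p ^ (glue (d, u) p).val
      = (ψ (c0 d) * ∏ b, ζ (jJ b) ^ (d b).val) *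
          ((-1) ^ pathForm u * ∏ α : Fin n, w d α ^ (u α).val) := by
    intro d u
    have hyj : ∀ b, glue (d, u) (jJ b) = d b := gluingEquiv_apply_right _ _ hbij d u
    have hyπ : ∀ α : Fin n, glue (d, u) (π d α) = u α := gluingEquiv_apply_left _ _ hbij d u
    rw [hf d _ hyj, ψ.apply_pathForm_add_linear hψ hiInj (hπInj d) (hπrange d),
      Fintype.prod_eq_prod_mul_prod_of_sumElim_bijective (hbij d)]
    simp only [hyj, hyπ, w, mul_pow, prod_mul_distrib]
    ring
  have hsum : ∑ y, ψ (f y) * ∏ p, ζ p ^ (y p).val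
      = ∑ d, (ψ (c0 d) * ∏ b, ζ (jJ b) ^ (d b).val) * pathSum n (w d) := by
    rw [← glue.sum_comp, Fintype.sum_prod_type]
    simp only [hfiber, pathSum, mul_sum]
  have hw : ∀ d α, ‖w d α‖ = 1 := fun d α => by rw [norm_mul, ψ.norm_apply, hζ, one_mul]
  rw [hsum]
  calc _ ≤ (Fintype.card (Fin k → ZMod 2) : ℝ) ^ 2 * 2 ^ (n + 1) := by
        refine norm_sum_sq_le_card_sq_mul _ fun d => ?_
        simpa [norm_prod, ψ.norm_apply, hζ] using norm_sq_pathSum_le n (w d) (hw d)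
    _ = (2 : ℝ) ^ (k + 1) * (2 : ℝ) ^ m := by
        rw [Fintype.card_fun, ZMod.card, Fintype.card_fin, ← Nat.sub_add_cancel hkm]
        push_cast
        ring

theorem stmt_4_general (q m k : ℕ) (hq : Even q) (hq1 : 0 < q) (hkm : k ≤ m)
    (iI : ℕ → Fin m) (jJ : Fin k → Fin m)
    (hiInj : Set.InjOn iI (Set.Iio (m - k))) (hjInj : Function.Injective jJ)
    (hdisj : ∀ a < m - k, ∀ b : Fin k, iI a ≠ jJ b)
    (hcover : ∀ v : Fin m, (∃ a < m - k, iI a = v) ∨ ∃ b : Fin k, jJ b = v)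
    (f : (Fin m → ZMod 2) → ZMod q)
    (π : (Fin k → ZMod 2) → ℕ → Fin m)
    (hπInj : ∀ d, Set.InjOn (π d) (Set.Iio (m - k)))
    (hπrange : ∀ d, (π d) '' Set.Iio (m - k) = iI '' Set.Iio (m - k))
    (c : (Fin k → ZMod 2) → ℕ → ZMod q) (c0 : (Fin k → ZMod 2) → ZMod q)
    (hf : ∀ d : Fin k → ZMod 2, ∀ y : Fin m → ZMod 2, (∀ b : Fin k, y (jJ b) = d b) →
      f y = ((q / 2 : ℕ) : ZMod q) *
              ((∑ α ∈ Finset.range (m - k - 1),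
                  (y (π d α)).val * (y (π d (α + 1))).val : ℕ) : ZMod q)
            + (∑ α ∈ Finset.range (m - k), c d α * ((y (iI α)).val : ZMod q)) + c0 d)
    (fc T t : ℝ) :
    ‖∑ i ∈ Finset.range (2 ^ m),
        polyVec m f i *
          Complex.exp (2 * Real.pi * Complex.I * ((fc : ℂ) + (i : ℂ) / (T : ℂ)) * (t : ℂ))‖ ^ 2
      ≤ (2 : ℝ) ^ (k + 1) * (2 : ℝ) ^ m := by
  have : NeZero q := ⟨hq1.ne'⟩
  set z := Complex.exp (↑(2 * Real.pi * t / T) * Complex.I)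
  set U := Complex.exp (↑(2 * Real.pi * fc * t) * Complex.I)
  have hterm : ∀ i : ℕ, polyVec m f i *
      Complex.exp (2 * Real.pi * Complex.I * ((fc : ℂ) + (i : ℂ) / (T : ℂ)) * (t : ℂ))
        = U * (ZMod.stdAddChar (f (bits m i)) * z ^ i) := by
    intro i
    rw [polyVec, ZMod.stdAddChar_apply, ZMod.toCircle_apply, ← Complex.exp_nat_mul,
      ← Complex.exp_add, ← Complex.exp_add, ← Complex.exp_add]
    congr 1
    push_cast
    ring
  rw [sum_congr rfl fun i _ => hterm i, ← mul_sum,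
    sum_range_two_pow_mul_pow m (fun y => ZMod.stdAddChar (f y)), norm_mul, mul_pow,
    Complex.norm_exp_ofReal_mul_I, one_pow, one_mul]
  exact norm_sq_sum_addChar_mul_prod_le _ (ZMod.stdAddChar_half hq) hkm iI jJ hiInj hjInj hdisj
    hcover f π hπInj hπrange c c0 hf _ fun p => by
      rw [norm_pow, Complex.norm_exp_ofReal_mul_I, one_pow]

/-- Corollary 1: if there is a set of `k` variables `x = (x_{j_0},…,x_{j_{k-1}})` such that for
each `d ∈ ℤ₂^k` the restriction `f|_{x=d}` equals
`(q/2)·∑_α x_{π_d(α)}x_{π_d(α+1)} + ∑_α c_{d,α} x_{i_α} + c_d` for some bijection `π_d`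
of `{0,…,m-k-1}` onto `I`, then the polyphase vector of `f` has PMEPR at most `2^{k+1}`:
the envelope power never exceeds `2^{k+1}·2^m`. -/
theorem stmt_4 (q m k : ℕ) (hq : Even q) (hq1 : 0 < q) (hkm : k ≤ m)
    (iI : ℕ → Fin m) (jJ : Fin k → Fin m)
    (hiInj : Set.InjOn iI (Set.Iio (m - k))) (hjInj : Function.Injective jJ)
    (hdisj : ∀ a < m - k, ∀ b : Fin k, iI a ≠ jJ b)
    (hcover : ∀ v : Fin m, (∃ a < m - k, iI a = v) ∨ ∃ b : Fin k, jJ b = v)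
    (f : (Fin m → ZMod 2) → ZMod q)
    (π : (Fin k → ZMod 2) → ℕ → Fin m)
    (hπInj : ∀ d, Set.InjOn (π d) (Set.Iio (m - k)))
    (hπrange : ∀ d, (π d) '' Set.Iio (m - k) = iI '' Set.Iio (m - k))
    (c : (Fin k → ZMod 2) → ℕ → ZMod q) (c0 : (Fin k → ZMod 2) → ZMod q)
    (hf : ∀ d : Fin k → ZMod 2, ∀ y : Fin m → ZMod 2, (∀ b : Fin k, y (jJ b) = d b) →
      f y = ((q / 2 : ℕ) : ZMod q) *
              ((∑ α ∈ Finset.range (m - k - 1),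
                  (y (π d α)).val * (y (π d (α + 1))).val : ℕ) : ZMod q)
            + (∑ α ∈ Finset.range (m - k), c d α * ((y (iI α)).val : ZMod q)) + c0 d)
    (fc T t : ℝ) (hT : 0 < T) (ht0 : 0 ≤ t) (htT : t < T) :
    ‖∑ i ∈ Finset.range (2 ^ m),
        polyVec m f i *
          Complex.exp (2 * Real.pi * Complex.I * ((fc : ℂ) + (i : ℂ) / (T : ℂ)) * (t : ℂ))‖ ^ 2
      ≤ (2 : ℝ) ^ (k + 1) * (2 : ℝ) ^ m :=
  stmt_4_general q m k hq hq1 hkm iI jJ hiInj hjInj hdisj hcover f π hπInj hπrange c c0 hf fc T t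
end
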